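/- Let R be a Prüfer domain and let φ : E → H be an R-linear map between finitely generated projective R-modules. Then the kernel of φ is a direct summand of E: there exists a submodule N of E with ker φ ⊓ N = ⊥ and ker φ ⊔ N = E (in particular ker φ is finitely generated projective). -/

import Mathlib

/-!
An invertible ideal `I` with `I * J = (c)` is projective: writing `c = ∑ aᵢ bᵢ`, the elements
`aᵢ` and the functionals `x ↦ x bᵢ / c` form a dual basis. Hence over a Prüfer domain every
finitely generated ideal is projective, and by induction on `n` (projecting onto one coordinate,
whose image is an ideal) so is every finitely generated submodule of `Rⁿ`. The image of `φ` is such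
a submodule, as `H` embeds in some `Rⁿ`; a surjection onto a projective module splits, so `ker φ`
is a direct summand of `E`.
-/

open LinearMap

theorem Ideal.exists_fin_sum_mul_eq_of_mem_mul {R : Type*} [CommSemiring R] {I J : Ideal R} {c : R}
    (h : c ∈ I * J) :
    ∃ (k : ℕ) (a b : Fin k → R), (∀ i, a i ∈ I) ∧ (∀ i, b i ∈ J) ∧ ∑ i, a i * b i = c := by
  refine Submodule.mul_induction_on h
    (fun x hx y hy => ⟨1, ![x], ![y], by simpa, by simpa, by simp⟩) ?_
  rintro x y ⟨k, a, b, ha, hb, rfl⟩ ⟨l, a', b', ha', hb', rfl⟩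
  refine ⟨k + l, Fin.append a a', Fin.append b b',
    Fin.addCases (by simpa using ha) (by simpa using ha'),
    Fin.addCases (by simpa using hb) (by simpa using hb'), by simp [Fin.sum_univ_add]⟩

theorem Ideal.projective_of_mul_eq_span_singleton {R : Type*} [CommRing R] [IsDomain R]
    {I J : Ideal R} {c : R} (hc : c ≠ 0) (hIJ : I * J = Ideal.span {c}) :
    Module.Projective R I := by
  obtain ⟨k, a, b, ha, hb, hab⟩ :=
    Ideal.exists_fin_sum_mul_eq_of_mem_mul (hIJ ▸ Ideal.mem_span_singleton_self c)
  -- `δ i x = x * b i / c`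
  let m : Fin k → I →ₗ[R] Ideal.span {c} := fun i =>
    (LinearMap.mulRight R (b i)).restrict fun x hx => hIJ ▸ Ideal.mul_mem_mul hx (hb i)
  let δ : Fin k → I →ₗ[R] R := fun i => LinearEquiv.coord R R c hc ∘ₗ m i
  have hδ : ∀ i (x : I), δ i x * c = x * b i := fun i x => by
    simpa [δ, m] using LinearEquiv.toSpanNonzeroSingleton_symm_apply_smul R R c hc (m i x)
  refine .of_split (LinearMap.pi δ) (Fintype.linearCombination R fun i => (⟨a i, ha i⟩ : I)) ?_
  ext x
  apply mul_right_cancel₀ hc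
  simp only [LinearMap.comp_apply, Fintype.linearCombination_apply, LinearMap.pi_apply,
    Submodule.coe_sum, Submodule.coe_smul, smul_eq_mul, LinearMap.id_apply, Finset.sum_mul]
  calc ∑ i, δ i x * a i * c = ∑ i, x * (a i * b i) := by
        refine Finset.sum_congr rfl fun i _ => ?_
        rw [mul_right_comm, hδ]; ring
    _ = x * c := by rw [← Finset.mul_sum, hab]

section Complements

variable {R M P : Type*} [Ring R] [AddCommGroup M] [Module R M] [AddCommGroup P] [Module R P]

theorem Submodule.finite_of_isCompl [Module.Finite R M] {p q : Submodule R M} (h : IsCompl p q) :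
    Module.Finite R p :=
  Module.Finite.of_surjective _ (Submodule.projectionOnto_surjective h)

theorem Submodule.projective_of_isCompl [Module.Projective R M] {p q : Submodule R M}
    (h : IsCompl p q) : Module.Projective R p :=
  Module.Projective.of_split p.subtype (p.projectionOnto q h) <|
    LinearMap.ext (Submodule.projectionOnto_apply_left h)

theorem LinearMap.exists_isCompl_ker (f : M →ₗ[R] P) [Module.Projective R (range f)] :
    ∃ N : Submodule R M, IsCompl (ker f) N := by
  obtain ⟨σ, hσ⟩ := f.rangeRestrict.exists_rightInverse_of_surjective f.range_rangeRestrict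
  have hidem : IsIdempotentElem (σ ∘ₗ f.rangeRestrict) := by
    change σ ∘ₗ (f.rangeRestrict ∘ₗ σ) ∘ₗ f.rangeRestrict = _
    rw [hσ, LinearMap.id_comp]
  have hker : ker (σ ∘ₗ f.rangeRestrict) = ker f := by
    rw [ker_comp_of_ker_eq_bot _ (ker_eq_bot_of_inverse hσ), ker_rangeRestrict]
  exact ⟨_, hker ▸ hidem.isCompl.symm⟩

theorem Module.Projective.of_ker_of_range (f : M →ₗ[R] P) [Module.Projective R (ker f)]
    [Module.Projective R (range f)] : Module.Projective R M := by
  obtain ⟨N, hN⟩ := f.exists_isCompl_ker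
  have : Module.Projective R N :=
    .of_equiv ((Submodule.quotientEquivOfIsCompl _ _ hN).symm ≪≫ₗ f.quotKerEquivRange).symm
  exact .of_equiv (Submodule.prodEquivOfIsCompl _ _ hN)

end Complements

theorem Module.Projective.of_injective_into_pi {R : Type*} [Ring R]
    (hR : ∀ I : Ideal R, I.FG → Module.Projective R I) {n : ℕ} {M : Type*} [AddCommGroup M]
    [Module R M] [Module.Finite R M] (f : M →ₗ[R] Fin n → R) (hf : Function.Injective f) :
    Module.Projective R M := by
  induction n generalizing M with
  | zero =>
    have : Subsingleton M := hf.subsingleton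
    infer_instance
  | succ n ih =>
    let g : M →ₗ[R] R := LinearMap.proj 0 ∘ₗ f
    have : Module.Projective R (range g) := hR _ (Module.Finite.iff_fg.mp inferInstance)
    obtain ⟨N, hN⟩ := g.exists_isCompl_ker
    have : Module.Finite R (ker g) := Submodule.finite_of_isCompl hN
    let tail : (Fin (n + 1) → R) →ₗ[R] Fin n → R := LinearMap.pi fun i => LinearMap.proj i.succ
    have : Module.Projective R (ker g) := by
      refine ih (tail ∘ₗ f ∘ₗ (ker g).subtype) fun x y hxy => Subtype.ext (hf (funext ?_))
      refine Fin.cases ?_ (fun i => congrFun hxy i)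
      exact x.2.trans y.2.symm
    exact .of_ker_of_range g

/-- Over a Prüfer domain, the kernel of a linear map between finitely generated
projective modules is a direct summand (in particular finitely generated projective). -/
theorem stmt_9 {R : Type*} [CommRing R] [IsDomain R]
    (hpruf : ∀ I : Ideal R, I.FG → I ≠ ⊥ →
      ∃ (J : Ideal R) (c : R), J.FG ∧ c ≠ 0 ∧ I * J = Ideal.span {c})
    {E H : Type*} [AddCommGroup E] [Module R E] [AddCommGroup H] [Module R H]
    [Module.Finite R E] [Module.Projective R E]
    [Module.Finite R H] [Module.Projective R H]
    (φ : E →ₗ[R] H) :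
    (∃ N : Submodule R E, LinearMap.ker φ ⊓ N = ⊥ ∧ LinearMap.ker φ ⊔ N = ⊤) ∧
    Module.Finite R ↥(LinearMap.ker φ) ∧ Module.Projective R ↥(LinearMap.ker φ) := by
  have hR : ∀ I : Ideal R, I.FG → Module.Projective R I := by
    intro I hI
    rcases eq_or_ne I ⊥ with rfl | hI0
    · infer_instance
    obtain ⟨J, c, -, hc, hIJ⟩ := hpruf I hI hI0
    exact Ideal.projective_of_mul_eq_span_singleton hc hIJ
  obtain ⟨n, -, g, -, hg, -⟩ := Module.Finite.exists_comp_eq_id_of_projective R H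
  have : Module.Projective R (range φ) :=
    .of_injective_into_pi hR (g ∘ₗ (range φ).subtype) (hg.comp Subtype.val_injective)
  obtain ⟨N, hN⟩ := φ.exists_isCompl_ker
  exact ⟨⟨N, hN.inf_eq_bot, hN.sup_eq_top⟩, Submodule.finite_of_isCompl hN,
    Submodule.projective_of_isCompl hN⟩
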